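/- arXiv:2311.08833 — 2 statements merged into one kernel-verified Lean document; each statement's English description precedes it below -/
import Mathlib

section
/- Let N be even and x, y ∈ ℝ^N with x ≠ ±y. Define, for an N × N real matrix A with rows w₁,…,w_N, the map P(x;A) = (⟨x,w₁⟩², ⟨x,w₂⟩², ⟨x,w₃⟩² + ⟨x,w₄⟩², …, ⟨x,w_{N-1}⟩² + ⟨x,w_N⟩²). Then the set {A ∈ ℝ^{N×N} : P(x;A) = P(y;A)} has dimension at most N² - (N/2 + 1). -/
open scoped ENNReal
open Set Module

/-!
Write `u = x - y`, `v = x + y`; then `⟪x,w⟫² - ⟪y,w⟫² = ⟪u,w⟫⟪v,w⟫`, with `u, v ≠ 0`. Rows `0`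
and `1` of `A` must therefore lie in the union of two hyperplanes, and each later pair of rows
`(w, w')` on the quadric `⟪u,w⟫⟪v,w⟫ + ⟪u,w'⟫⟪v,w'⟫ = 0` in `ℝ^N × ℝ^N`. If `u, v` are
independent, this quadric is the preimage, under a linear surjection onto `ℝ⁴`, of the cone
`ab + cd = 0`, which is covered by two `C¹` images of `ℝ³`; if `u` is a multiple of `v`, it lies
in a hyperplane. Either way it is covered by countably many `C¹` images of `ℝ^(2N-1)`, and these
coverings multiply, giving `2(N-1) + (N/2 - 1)(2N-1) = N² - (N/2 + 1)` for the whole set.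
Such a covering bounds the Hausdorff dimension by the number of parameters, since `C¹` maps
between finite-dimensional spaces do not increase it.
-/

variable {E F : Type*} [NormedAddCommGroup E] [NormedSpace ℝ E]
  [NormedAddCommGroup F] [NormedSpace ℝ F]

def IsC1Covered (d : ℕ) (s : Set E) : Prop :=
  ∃ S : Set ((Fin d → ℝ) → E), S.Countable ∧ (∀ f ∈ S, ContDiff ℝ 1 f) ∧ s ⊆ ⋃ f ∈ S, range f

theorem isC1Covered_range {V : Type*} [NormedAddCommGroup V] [NormedSpace ℝ V]
    [FiniteDimensional ℝ V] {f : V → E} (hf : ContDiff ℝ 1 f) :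
    IsC1Covered (finrank ℝ V) (range f) := by
  let e : V ≃L[ℝ] (Fin (finrank ℝ V) → ℝ) :=
    ContinuousLinearEquiv.ofFinrankEq (finrank_fin_fun ℝ).symm
  refine ⟨{f ∘ e.symm}, countable_singleton _, ?_, ?_⟩
  · simpa using hf.comp e.symm.contDiff
  · simp [e.symm.surjective.range_comp]

namespace IsC1Covered

variable {d d₁ d₂ : ℕ} {s t : Set E}

theorem dimH_le (h : IsC1Covered d s) : dimH s ≤ d := by
  obtain ⟨S, hSc, hS, hsS⟩ := h
  calc dimH s ≤ dimH (⋃ f ∈ S, range f) := dimH_mono hsS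
    _ = ⨆ f ∈ S, dimH (range f) := dimH_bUnion hSc _
    _ ≤ d := iSup₂_le fun f hf => (hS f hf).dimH_range_le.trans_eq (by simp)

theorem mono (hst : s ⊆ t) (h : IsC1Covered d t) : IsC1Covered d s :=
  let ⟨S, hSc, hS, htS⟩ := h
  ⟨S, hSc, hS, hst.trans htS⟩

theorem union (hs : IsC1Covered d s) (ht : IsC1Covered d t) : IsC1Covered d (s ∪ t) := by
  obtain ⟨S, hSc, hS, hsS⟩ := hs
  obtain ⟨T, hTc, hT, htT⟩ := ht
  refine ⟨S ∪ T, hSc.union hTc, fun f hf => hf.elim (hS f) (hT f), ?_⟩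
  rw [biUnion_union]
  exact union_subset_union hsS htT

theorem biUnion {ι : Type*} {I : Set ι} (hI : I.Countable) {s : ι → Set E}
    (h : ∀ i ∈ I, IsC1Covered d (s i)) : IsC1Covered d (⋃ i ∈ I, s i) := by
  choose! S hSc hS hsS using h
  refine ⟨⋃ i ∈ I, S i, hI.biUnion hSc, ?_, ?_⟩
  · simp only [mem_iUnion]
    rintro f ⟨i, hi, hf⟩
    exact hS i hi f hf
  · simp only [iUnion_subset_iff]
    intro i hi x hx
    obtain ⟨f, hf, hx⟩ := mem_iUnion₂.1 (hsS i hi hx)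
    exact mem_iUnion₂.2 ⟨f, mem_iUnion₂.2 ⟨i, hi, hf⟩, hx⟩

theorem image {g : E → F} (hg : ContDiff ℝ 1 g) (h : IsC1Covered d s) :
    IsC1Covered d (g '' s) := by
  obtain ⟨S, hSc, hS, hsS⟩ := h
  refine ⟨(g ∘ ·) '' S, hSc.image _, forall_mem_image.2 fun f hf => hg.comp (hS f hf), ?_⟩
  rw [biUnion_image]
  refine (image_mono hsS).trans ?_
  simp only [image_iUnion₂, ← range_comp]
  exact subset_rfl

theorem prod {t : Set F} (hs : IsC1Covered d₁ s) (ht : IsC1Covered d₂ t) :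
    IsC1Covered (d₁ + d₂) (s ×ˢ t) := by
  obtain ⟨S, hSc, hS, hsS⟩ := hs
  obtain ⟨T, hTc, hT, htT⟩ := ht
  have hrange : ∀ f ∈ S, ∀ g ∈ T, IsC1Covered (d₁ + d₂) (range (Prod.map f g)) :=
    fun f hf g hg => by simpa using isC1Covered_range ((hS f hf).prodMap (hT g hg))
  refine (biUnion hSc fun f hf => biUnion hTc (hrange f hf)).mono ?_
  rintro ⟨a, b⟩ ⟨ha, hb⟩
  have ha' := hsS ha
  have hb' := htT hb
  simp only [mem_iUnion, mem_range] at ha' hb' ⊢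
  obtain ⟨f, hf, p, rfl⟩ := ha'
  obtain ⟨g, hg, q, rfl⟩ := hb'
  exact ⟨f, hf, g, hg, (p, q), rfl⟩

theorem pi {n : ℕ} {t : Fin n → Set F} {d : Fin n → ℕ} (h : ∀ i, IsC1Covered (d i) (t i)) :
    IsC1Covered (∑ i, d i) (univ.pi t) := by
  induction n with
  | zero =>
    have := isC1Covered_range (contDiff_const (c := (Fin.elim0 : Fin 0 → F)) (E := Fin 0 → ℝ))
    simpa using this.mono fun x _ => mem_range.2 ⟨0, Subsingleton.elim _ _⟩
  | succ n ih =>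
    have hcons := ((h 0).prod (ih fun i => h i.succ)).image
      (Fin.consEquivL ℝ fun _ => F).contDiff
    rw [Fin.sum_univ_succ]
    refine hcons.mono fun x hx => (mem_image ..).2 ⟨(x 0, Fin.tail x), ?_, ?_⟩
    · exact mk_mem_prod (hx 0 trivial) fun i _ => hx _ trivial
    · ext i
      simp

theorem preimage_of_injective [FiniteDimensional ℝ F] {t : Set F} (φ : E →ₗ[ℝ] F)
    (hφ : Function.Injective φ) (h : IsC1Covered d t) : IsC1Covered d (φ ⁻¹' t) := by
  refine (h.image φ.leftInverse.toContinuousLinearMap.contDiff).mono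
    fun x hx => (mem_image ..).2 ⟨φ x, hx, ?_⟩
  simp [LinearMap.leftInverse_apply_of_inj (LinearMap.ker_eq_bot.2 hφ)]

end IsC1Covered

theorem LinearMap.exists_eq_smul_or_surjective_prod {K V : Type*} [Field K] [AddCommGroup V]
    [Module K V] {f g : V →ₗ[K] K} (hg : g ≠ 0) :
    (∃ c : K, f = c • g) ∨ Function.Surjective (f.prod g) := by
  by_cases hle : LinearMap.ker g ≤ LinearMap.ker f
  · left
    have hspan := mem_span_of_iInf_ker_le_ker (L := fun _ : Unit => g) (by simpa using hle)
    rw [range_const, Submodule.mem_span_singleton] at hspan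
    exact hspan.imp fun c hc => hc.symm
  · right
    have hf : f ≠ 0 := by
      rintro rfl
      exact hle (by simp)
    have hsup : LinearMap.ker f ⊔ LinearMap.ker g = ⊤ :=
      (LinearMap.isCoatom_ker_of_surjective (LinearMap.surjective_of_ne_zero hf)).sup_eq_top_of_ne
        (LinearMap.isCoatom_ker_of_surjective (LinearMap.surjective_of_ne_zero hg))
        fun h => hle h.ge
    rw [← LinearMap.range_eq_top, LinearMap.range_prod_eq hsup,
      LinearMap.range_eq_top.2 (LinearMap.surjective_of_ne_zero hf),
      LinearMap.range_eq_top.2 (LinearMap.surjective_of_ne_zero hg), Submodule.prod_top]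

theorem isC1Covered_cone :
    IsC1Covered 3 {p : (ℝ × ℝ) × (ℝ × ℝ) | p.1.1 * p.1.2 + p.2.1 * p.2.2 = 0} := by
  have h₁ := isC1Covered_range (V := ℝ × ℝ × ℝ)
    (f := fun q => ((q.1, q.2.2 * q.2.1), (q.2.1, -(q.2.2 * q.1)))) (by fun_prop)
  have h₂ := isC1Covered_range (V := ℝ × ℝ × ℝ)
    (f := fun q => (((0 : ℝ), q.1), ((0 : ℝ), q.2.1))) (by fun_prop)
  simp only [finrank_prod, finrank_self] at h₁ h₂
  refine (h₁.union h₂).mono ?_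
  rintro ⟨⟨a, b⟩, c, e⟩ hp
  replace hp : a * b + c * e = 0 := hp
  -- `(b, e)` is orthogonal to `(a, c)`, hence equal to `t • (c, -a)` unless `a = c = 0`.
  by_cases hac : a ^ 2 + c ^ 2 = 0
  · have ha : a = 0 := by nlinarith
    have hc : c = 0 := by nlinarith
    exact Or.inr ⟨(b, e, 0), by simp [ha, hc]⟩
  · refine Or.inl ⟨(a, c, (b * c - a * e) / (a ^ 2 + c ^ 2)), ?_⟩
    simp only [Prod.mk.injEq, true_and]
    constructor
    · field_simp
      linear_combination (-a) * hp
    · field_simp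
      linear_combination (-c) * hp

section FiniteDimensional

variable [FiniteDimensional ℝ E]

theorem isC1Covered_submodule (p : Submodule ℝ E) : IsC1Covered (finrank ℝ p) (p : Set E) := by
  simpa using isC1Covered_range p.subtypeL.contDiff

theorem isC1Covered_ker {f : E →ₗ[ℝ] ℝ} (hf : f ≠ 0) :
    IsC1Covered (finrank ℝ E - 1) (LinearMap.ker f : Set E) := by
  have hrank := Module.Dual.finrank_ker_add_one_of_ne_zero hf
  exact (by omega : finrank ℝ (LinearMap.ker f) = finrank ℝ E - 1) ▸ isC1Covered_submodule _

theorem IsC1Covered.preimage_of_surjective [FiniteDimensional ℝ F] {d : ℕ} {t : Set F}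
    (φ : E →ₗ[ℝ] F) (hφ : Function.Surjective φ) (h : IsC1Covered d t) : IsC1Covered (d + finrank ℝ (LinearMap.ker φ)) (φ ⁻¹' t) := by
  obtain ⟨ψ, hψ⟩ := φ.exists_rightInverse_of_surjective (LinearMap.range_eq_top.2 hφ)
  have hφψ (z : F) : φ (ψ z) = z := LinearMap.congr_fun hψ z
  have hsplit : ContDiff ℝ 1 fun p : F × E => ψ p.1 + p.2 :=
    (ψ.toContinuousLinearMap.contDiff.comp contDiff_fst).add contDiff_snd
  refine ((h.prod (isC1Covered_submodule (LinearMap.ker φ))).image hsplit).mono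
    fun x hx => (mem_image ..).2 ⟨(φ x, x - ψ (φ x)), mk_mem_prod hx ?_, by simp⟩
  simp [hφψ]

theorem isC1Covered_setOf_mul_eq_zero {f g : E →ₗ[ℝ] ℝ} (hf : f ≠ 0) (hg : g ≠ 0) :
    IsC1Covered (finrank ℝ E - 1) {w | f w * g w = 0} :=
  ((isC1Covered_ker hf).union (isC1Covered_ker hg)).mono fun _ hw => mul_eq_zero.1 hw

theorem isC1Covered_setOf_mul_add_mul_eq_zero {f g : E →ₗ[ℝ] ℝ} (hf : f ≠ 0) (hg : g ≠ 0) :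
    IsC1Covered (2 * finrank ℝ E - 1) {p : E × E | f p.1 * g p.1 + f p.2 * g p.2 = 0} := by
  have hker := Module.Dual.finrank_ker_add_one_of_ne_zero hg
  rcases LinearMap.exists_eq_smul_or_surjective_prod (f := f) hg with ⟨c, rfl⟩ | hsurj
  · have hc : c ≠ 0 := by
      rintro rfl
      exact hf (zero_smul ℝ g)
    have h := (isC1Covered_ker hg).prod (isC1Covered_submodule (⊤ : Submodule ℝ E))
    rw [finrank_top] at h
    refine (by omega : finrank ℝ E - 1 + finrank ℝ E = 2 * finrank ℝ E - 1) ▸ h.mono ?_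
    rintro ⟨w, w'⟩ hw
    replace hw : c * (g w ^ 2 + g w' ^ 2) = 0 := by
      simp only [mem_ofPred_eq, LinearMap.smul_apply, smul_eq_mul] at hw
      linear_combination hw
    have hsq := (add_eq_zero_iff_of_nonneg (sq_nonneg _) (sq_nonneg _)).1
      ((mul_eq_zero.1 hw).resolve_left hc)
    exact ⟨pow_eq_zero_iff two_ne_zero |>.1 hsq.1, trivial⟩
  · let Φ := (f.prod g).prodMap (f.prod g)
    have hΦ : Function.Surjective Φ := Prod.map_surjective.2 ⟨hsurj, hsurj⟩
    have hrank := Φ.finrank_range_add_finrank_ker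
    rw [LinearMap.range_eq_top.2 hΦ, finrank_top] at hrank
    simp only [finrank_prod, finrank_self] at hrank
    refine (by omega : 3 + finrank ℝ (LinearMap.ker Φ) = 2 * finrank ℝ E - 1) ▸
      (isC1Covered_cone.preimage_of_surjective Φ hΦ).mono fun p hp => hp

theorem isC1Covered_pairs {m d₁ d₂ : ℕ} {s t : Set (E × E)}
    (hs : IsC1Covered d₁ s) (ht : IsC1Covered d₂ t) :
    IsC1Covered (d₁ + m * d₂) {A : Fin (2 * m + 2) → E | (A ⟨0, by omega⟩, A ⟨1, by omega⟩) ∈ s ∧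
      ∀ k : Fin m, (A ⟨2 * (k + 1), by omega⟩, A ⟨2 * (k + 1) + 1, by omega⟩) ∈ t} := by
  let π : (Fin (2 * m + 2) → E) →ₗ[ℝ] (E × E) × (Fin m → E × E) :=
    ((LinearMap.proj ⟨0, by omega⟩).prod (LinearMap.proj ⟨1, by omega⟩)).prod
      (LinearMap.pi fun k : Fin m =>
        (LinearMap.proj ⟨2 * (k + 1), by omega⟩).prod (LinearMap.proj ⟨2 * (k + 1) + 1, by omega⟩))
  have hπ : Function.Injective π := by
    intro A B hAB
    simp only [π, Prod.ext_iff, funext_iff, LinearMap.prod_apply] at hAB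
    obtain ⟨⟨h0, h1⟩, hpairs⟩ := hAB
    funext ⟨i, hi⟩
    match i, hi with
    | 0, _ => exact h0
    | 1, _ => exact h1
    | i + 2, hi =>
      obtain ⟨k, rfl | rfl⟩ := Nat.even_or_odd' i
      · exact (hpairs ⟨k, by omega⟩).1
      · exact (hpairs ⟨k, by omega⟩).2
  have h := (hs.prod (IsC1Covered.pi fun _ : Fin m => ht)).preimage_of_injective π hπ
  rw [Finset.sum_const, Finset.card_univ, Fintype.card_fin, smul_eq_mul] at h
  exact h.mono fun A hA => mk_mem_prod hA.1 (mem_univ_pi.2 fun k => hA.2 k)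

end FiniteDimensional

/-- For `N` even and `x ≠ ±y` in `ℝ^N`, the set of `N × N` matrices `A`
(with rows `A 0, …, A (N-1)`) such that `P(x;A) = P(y;A)`, where
`P(x;A) = (⟪x,w₁⟫², ⟪x,w₂⟫², ⟪x,w₃⟫² + ⟪x,w₄⟫², …, ⟪x,w_{N-1}⟫² + ⟪x,w_N⟫²)`,
has dimension at most `N² - (N/2 + 1)`. -/
theorem stmt2 {N : ℕ} (hN : Even N) (x y : Fin N → ℝ) (hxy : x ≠ y) (hxy' : x ≠ -y) :
    dimH {A : Fin N → Fin N → ℝ |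
        (∀ h0 : 0 < N, (∑ j, x j * A ⟨0, h0⟩ j) ^ 2 = (∑ j, y j * A ⟨0, h0⟩ j) ^ 2) ∧
        (∀ h1 : 1 < N, (∑ j, x j * A ⟨1, h1⟩ j) ^ 2 = (∑ j, y j * A ⟨1, h1⟩ j) ^ 2) ∧
        ∀ k : ℕ, 1 ≤ k → ∀ h : 2 * k + 1 < N,
          (∑ j, x j * A ⟨2 * k, by omega⟩ j) ^ 2 + (∑ j, x j * A ⟨2 * k + 1, h⟩ j) ^ 2 =
          (∑ j, y j * A ⟨2 * k, by omega⟩ j) ^ 2 + (∑ j, y j * A ⟨2 * k + 1, h⟩ j) ^ 2} ≤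
      ((N ^ 2 - (N / 2 + 1) : ℕ) : ℝ≥0∞) := by
  obtain ⟨m, rfl⟩ : ∃ m, N = 2 * m + 2 := by
    obtain ⟨k, rfl⟩ := hN
    rcases k with _ | k
    · exact absurd (funext fun i => (Nat.not_lt_zero _ i.2).elim) hxy
    · exact ⟨k, by ring⟩
  set f := dotProductEquiv ℝ (Fin (2 * m + 2)) (x - y)
  set g := dotProductEquiv ℝ (Fin (2 * m + 2)) (x + y)
  have hf : f ≠ 0 := (LinearEquiv.map_ne_zero_iff _).2 (sub_ne_zero.2 hxy)
  have hg : g ≠ 0 :=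
    (LinearEquiv.map_ne_zero_iff _).2 fun h => hxy' (eq_neg_of_add_eq_zero_left h)
  have hsq (w : Fin (2 * m + 2) → ℝ) :
      (∑ j, x j * w j) ^ 2 - (∑ j, y j * w j) ^ 2 = f w * g w := by
    simp only [f, g, dotProductEquiv_apply_apply, sub_dotProduct, add_dotProduct]
    simp only [dotProduct]
    ring
  have hdim : (2 * m + 2 - 1 + (2 * m + 2 - 1)) + m * (2 * (2 * m + 2) - 1) =
      (2 * m + 2) ^ 2 - ((2 * m + 2) / 2 + 1) := by
    rw [show (2 * m + 2) / 2 = m + 1 by omega, show 2 * (2 * m + 2) - 1 = 4 * m + 3 by omega,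
      show 2 * m + 2 - 1 = 2 * m + 1 by omega]
    exact (Nat.sub_eq_of_eq_add (by ring)).symm
  have hcov := isC1Covered_pairs (m := m)
    ((isC1Covered_setOf_mul_eq_zero hf hg).prod (isC1Covered_setOf_mul_eq_zero hf hg))
    (isC1Covered_setOf_mul_add_mul_eq_zero hf hg)
  rw [finrank_fin_fun, hdim] at hcov
  refine (hcov.mono ?_).dimH_le
  rintro A ⟨h0, h1, hpairs⟩
  refine ⟨mk_mem_prod ?_ ?_, fun k => ?_⟩
  · show f _ * g _ = 0
    rw [← hsq, h0, sub_self]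
  · show f _ * g _ = 0
    rw [← hsq, h1, sub_self]
  · show f _ * g _ + f _ * g _ = 0
    have := hpairs (k + 1) (by omega) (by omega)
    rw [← hsq, ← hsq]
    linarith
end

section
/- Let N be odd and x, y ∈ ℝ^N with x ≠ ±y. Define, for an N × N real matrix A with rows w₁,…,w_N, the map P(x;A) = (⟨x,w₁⟩², ⟨x,w₂⟩² + ⟨x,w₃⟩², …, ⟨x,w_{N-1}⟩² + ⟨x,w_N⟩²). Then the set {A ∈ ℝ^{N×N} : P(x;A) = P(y;A)} has dimension at most N² - (N+1)/2. -/
open scoped ENNReal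
open Set Module Matrix Function

/-!
Write `u = x - y` and `v = x + y`. Since `⟪x,w⟫² - ⟪y,w⟫² = ⟪u,w⟫⟪v,w⟫`, the set is the
preimage, under the linear map `A ↦ (⟪u,wᵢ⟫, ⟪v,wᵢ⟫)ᵢ`, of a product of one copy of
`{a b = 0} ⊆ ℝ²` and `(N-1)/2` copies of the cone `{a b + a' b' = 0} ⊆ ℝ⁴`. These are covered by
finitely many `C¹` images of `ℝ¹` and of `ℝ³` respectively. If `u` and `v` are linearly
independent the linear map is surjective, so the set is covered by finitely many `C¹` images of
`ℝ^(N² - (N+1)/2)`, and `C¹` maps do not increase Hausdorff dimension. Otherwise `v = a u` with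
`a ≠ 0`, the conditions become `⟪u,wᵢ⟫ = 0` for every row, and the set lies in a subspace of
dimension `N² - N`.
-/

section C1Cover

variable {E F : Type*} [NormedAddCommGroup E] [NormedSpace ℝ E]
  [NormedAddCommGroup F] [NormedSpace ℝ F] {d d' : ℕ} {S T : Set E} {U : Set F}

def CoveredByC1Images (d : ℕ) (S : Set E) : Prop :=
  ∃ C : Set ((Fin d → ℝ) → E), C.Finite ∧ (∀ f ∈ C, ContDiff ℝ 1 f) ∧ S ⊆ ⋃ f ∈ C, range f

theorem coveredByC1Images_singleton (d : ℕ) (c : E) : CoveredByC1Images d {c} :=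
  ⟨{fun _ => c}, finite_singleton _, by simp [contDiff_const], by simp⟩

namespace CoveredByC1Images

theorem mono (h : CoveredByC1Images d T) (hST : S ⊆ T) : CoveredByC1Images d S :=
  let ⟨C, hC, hf, hT⟩ := h
  ⟨C, hC, hf, hST.trans hT⟩

theorem dimH_le (h : CoveredByC1Images d S) : dimH S ≤ d := by
  obtain ⟨C, hC, hf, hS⟩ := h
  calc dimH S ≤ dimH (⋃ f ∈ C, range f) := dimH_mono hS
    _ = ⨆ f ∈ C, dimH (range f) := dimH_bUnion hC.countable _
    _ ≤ d := iSup₂_le fun f hfC => (hf f hfC).dimH_range_le.trans_eq (by simp)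

theorem prod (hS : CoveredByC1Images d S) (hU : CoveredByC1Images d' U) :
    CoveredByC1Images (d + d') (S ×ˢ U) := by
  obtain ⟨C, hC, hf, hS⟩ := hS
  obtain ⟨D, hD, hg, hU⟩ := hU
  refine ⟨image2 (fun f g z => (f fun k => z (Fin.castAdd d' k), g fun k => z (Fin.natAdd d k)))
    C D, hC.image2 _ hD, ?_, ?_⟩
  · rintro _ ⟨f, hfC, g, hgD, rfl⟩
    exact ((hf f hfC).comp (by fun_prop)).prodMk ((hg g hgD).comp (by fun_prop))
  · rintro ⟨s, t⟩ ⟨hs, ht⟩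
    obtain ⟨f, hfC, a, rfl⟩ := mem_iUnion₂.1 (hS hs)
    obtain ⟨g, hgD, b, rfl⟩ := mem_iUnion₂.1 (hU ht)
    exact mem_iUnion₂.2 ⟨_, mem_image2_of_mem hfC hgD, Fin.append a b, by simp⟩

theorem pi {ι : Type*} [Fintype ι] {G : ι → Type*} [∀ i, NormedAddCommGroup (G i)]
    [∀ i, NormedSpace ℝ (G i)] {T : ∀ i, Set (G i)} (h : ∀ i, CoveredByC1Images d (T i)) :
    CoveredByC1Images (Fintype.card ι * d) (univ.pi T) := by
  choose C hC hf hT using h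
  let e : ι × Fin d ≃ Fin (Fintype.card ι * d) :=
    ((Fintype.equivFin ι).prodCongr (Equiv.refl _)).trans finProdFinEquiv
  refine ⟨(fun f z i => f i (fun k => z (e (i, k)))) '' univ.pi C, (Finite.pi hC).image _, ?_, ?_⟩
  · rintro _ ⟨f, hfC, rfl⟩
    exact contDiff_pi.2 fun i => (hf i (f i) (hfC i trivial)).comp (by fun_prop)
  · intro t ht
    choose f hfC a ha using fun i => mem_iUnion₂.1 (hT i (ht i trivial))
    refine mem_iUnion₂.2 ⟨_, mem_image_of_mem _ (fun i _ => hfC i),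
      fun p => a (e.symm p).1 (e.symm p).2, ?_⟩
    funext i
    simpa using ha i

theorem preimage [FiniteDimensional ℝ E] (h : CoveredByC1Images d U)
    {L : E →ₗ[ℝ] F} (hL : Surjective L) :
    CoveredByC1Images (d + finrank ℝ (LinearMap.ker L)) (L ⁻¹' U) := by
  obtain ⟨C, hC, hf, hU⟩ := h
  have : FiniteDimensional ℝ F := Module.Finite.of_surjective L hL
  obtain ⟨s, hs⟩ := L.exists_rightInverse_of_surjective (LinearMap.range_eq_top.2 hL)
  let κ := (LinearMap.ker L).subtype ∘ₗ (finBasis ℝ (LinearMap.ker L)).equivFun.symm.toLinearMap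
  let s' := LinearMap.toContinuousLinearMap s
  let κ' := LinearMap.toContinuousLinearMap κ
  refine ⟨(fun f z => s' (f (fun k => z (Fin.castAdd _ k))) + κ' (fun k => z (Fin.natAdd d k)))
    '' C, hC.image _, ?_, ?_⟩
  · rintro _ ⟨f, hfC, rfl⟩
    exact (s'.contDiff.comp ((hf f hfC).comp (by fun_prop))).add (κ'.contDiff.comp (by fun_prop))
  · intro x hx
    obtain ⟨f, hfC, a, ha⟩ := mem_iUnion₂.1 (hU hx)
    have hker : x - s (f a) ∈ LinearMap.ker L := by
      rw [LinearMap.mem_ker, map_sub, ← LinearMap.comp_apply, hs, LinearMap.id_apply, ha, sub_self]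
    refine mem_iUnion₂.2 ⟨_, mem_image_of_mem _ hfC,
      Fin.append a ((finBasis ℝ (LinearMap.ker L)).equivFun ⟨_, hker⟩), ?_⟩
    simp [s', κ', κ]

end CoveredByC1Images

end C1Cover

theorem coveredByC1Images_mul_eq_zero : CoveredByC1Images 1 {p : ℝ × ℝ | p.1 * p.2 = 0} := by
  refine ⟨{fun z => (0, z 0), fun z => (z 0, 0)}, toFinite _, ?_, ?_⟩
  · rintro f (rfl | rfl) <;> fun_prop
  · rintro ⟨a, b⟩ (h : a * b = 0)
    rcases mul_eq_zero.1 h with rfl | rfl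
    · exact mem_biUnion (Or.inl rfl) ⟨fun _ => b, rfl⟩
    · exact mem_biUnion (Or.inr rfl) ⟨fun _ => a, rfl⟩

-- `a * b + a' * b' = 0` iff `!![a, a'; -b', b]` is singular: either its second row is a multiple
-- of the first (first chart) or its first row is a multiple of the second (second chart).
theorem coveredByC1Images_mul_add_mul_eq_zero :
    CoveredByC1Images 3 {p : (ℝ × ℝ) × (ℝ × ℝ) | p.1.1 * p.1.2 + p.2.1 * p.2.2 = 0} := by
  refine ⟨{fun z => ((z 0, z 1 * z 2), (z 2, -(z 1 * z 0))),
    fun z => ((z 0 * z 1, z 2), (z 0 * z 2, -z 1))}, toFinite _, ?_, ?_⟩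
  · rintro f (rfl | rfl) <;> fun_prop
  · rintro ⟨⟨a, b⟩, a', b'⟩ (h : a * b + a' * b' = 0)
    by_cases hb : b ^ 2 + b' ^ 2 = 0
    · obtain ⟨rfl, rfl⟩ : b = 0 ∧ b' = 0 := by constructor <;> nlinarith
      exact mem_biUnion (Or.inl rfl) ⟨![a, 0, a'], by simp⟩
    · refine mem_biUnion (Or.inr rfl) ⟨![(a' * b - a * b') / (b ^ 2 + b' ^ 2), -b', b], ?_⟩
      simp only [Matrix.cons_val, neg_neg, Prod.mk.injEq, and_true]
      constructor <;> field_simp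
      · linear_combination (-b) * h
      · linear_combination (-b') * h

def pairBlocks (R : Type*) [Semiring R] (m : ℕ) (α : Type*) [AddCommMonoid α] [Module R α] :
    (Fin (2 * m + 1) → α) →ₗ[R] α × (Fin m → α × α) where
  toFun p := (p 0, fun k => (p ⟨2 * k + 1, by omega⟩, p ⟨2 * k + 2, by omega⟩))
  map_add' _ _ := rfl
  map_smul' _ _ := rfl

theorem pairBlocks_surjective {R : Type*} [Semiring R] {m : ℕ} {α : Type*} [AddCommMonoid α]
    [Module R α] : Surjective (pairBlocks R m α) := by
  rintro ⟨a, q⟩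
  refine ⟨fun r => if hr : (r : ℕ) = 0 then a else
    (if (r : ℕ) % 2 = 1 then Prod.fst else Prod.snd) (q ⟨(r - 1) / 2, by omega⟩), ?_⟩
  simp only [pairBlocks, LinearMap.coe_mk, AddHom.coe_mk, Prod.mk.injEq]
  refine ⟨rfl, funext fun k => ?_⟩
  have hk : (2 * (k : ℕ) + 1) / 2 = k := by omega
  simp [hk, Nat.add_mod]

theorem Matrix.mulVec_surjective_of_linearIndependent_row {K m n : Type*} [Field K] [Fintype m]
    [Fintype n] {M : Matrix m n K} (h : LinearIndependent K M.row) : Surjective M.mulVec :=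
  LinearMap.range_eq_top.1 <| Submodule.eq_top_of_finrank_eq <|
    h.rank_matrix.trans (finrank_fintype_fun_eq_card K).symm

section DotProduct

variable {n : Type*} [Fintype n]

theorem sq_dotProduct_sub_sq_dotProduct {R : Type*} [CommRing R] (x y w : n → R) :
    (x ⬝ᵥ w) ^ 2 - (y ⬝ᵥ w) ^ 2 = ((x - y) ⬝ᵥ w) * ((x + y) ⬝ᵥ w) := by
  rw [sub_dotProduct, add_dotProduct]; ring

theorem dotProductBilin_surjective {u : n → ℝ} (hu : u ≠ 0) :
    Surjective (dotProductBilin ℝ ℝ u) := fun t =>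
  ⟨(t / (u ⬝ᵥ u)) • u, by simp [dotProduct_self_eq_zero.not.2 hu]⟩

theorem dotProductBilin_prod_surjective {u v : n → ℝ} (h : LinearIndependent ℝ ![u, v]) :
    Surjective ((dotProductBilin ℝ ℝ u).prod (dotProductBilin ℝ ℝ v)) := by
  rintro ⟨a, b⟩
  obtain ⟨w, hw⟩ := mulVec_surjective_of_linearIndependent_row (M := Matrix.of ![u, v]) h ![a, b]
  exact ⟨w, Prod.ext (congrFun hw 0) (congrFun hw 1)⟩

end DotProduct

section PairedSquares

variable {m : ℕ} {x y : Fin (2 * m + 1) → ℝ}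

/-- The map `P(x; A)` of the paper, for `N = 2 * m + 1`. -/
def pairedSquares (x : Fin (2 * m + 1) → ℝ) (A : Fin (2 * m + 1) → Fin (2 * m + 1) → ℝ) :
    ℝ × (Fin m → ℝ) :=
  ((x ⬝ᵥ A 0) ^ 2, fun k => (x ⬝ᵥ A ⟨2 * k + 1, by omega⟩) ^ 2 + (x ⬝ᵥ A ⟨2 * k + 2, by omega⟩) ^ 2)

theorem pairBlocks_mem_of_pairedSquares_eq {A : Fin (2 * m + 1) → Fin (2 * m + 1) → ℝ}
    (h : pairedSquares x A = pairedSquares y A) :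
    pairBlocks ℝ m (ℝ × ℝ) (fun i => ((x - y) ⬝ᵥ A i, (x + y) ⬝ᵥ A i)) ∈
      {p : ℝ × ℝ | p.1 * p.2 = 0} ×ˢ
        univ.pi fun _ => {q : (ℝ × ℝ) × (ℝ × ℝ) | q.1.1 * q.1.2 + q.2.1 * q.2.2 = 0} := by
  simp only [pairedSquares, Prod.ext_iff, funext_iff] at h
  refine ⟨?_, fun k _ => ?_⟩ <;> dsimp [pairBlocks]
  · rw [← sq_dotProduct_sub_sq_dotProduct, h.1, sub_self]
  · rw [← sq_dotProduct_sub_sq_dotProduct, ← sq_dotProduct_sub_sq_dotProduct, sub_add_sub_comm,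
      h.2 k, sub_self]

theorem dimH_setOf_pairedSquares_eq_le_of_linearIndependent
    (h : LinearIndependent ℝ ![x - y, x + y]) :
    dimH {A | pairedSquares x A = pairedSquares y A} ≤ ((2 * m + 1) ^ 2 - (m + 1) : ℕ) := by
  let Φ := pairBlocks ℝ m (ℝ × ℝ) ∘ₗ
    ((dotProductBilin ℝ ℝ (x - y)).prod (dotProductBilin ℝ ℝ (x + y))).compLeft (Fin (2 * m + 1))
  have hΦ : Surjective Φ :=
    (pairBlocks_surjective (R := ℝ)).comp (dotProductBilin_prod_surjective h).comp_left
  have hcov := ((coveredByC1Images_mul_eq_zero.prod (CoveredByC1Images.pi fun _ : Fin m =>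
    coveredByC1Images_mul_add_mul_eq_zero)).preimage hΦ).mono
      fun A hA => pairBlocks_mem_of_pairedSquares_eq hA
  have hrank := LinearMap.finrank_range_add_finrank_ker Φ
  rw [LinearMap.range_eq_top.2 hΦ, finrank_top] at hrank
  refine hcov.dimH_le.trans (Nat.cast_le.2 ?_)
  simp [Module.finrank_pi_fintype, sq] at hrank ⊢
  omega

theorem dimH_setOf_pairedSquares_eq_le_of_smul {a : ℝ} (hu : x - y ≠ 0) (ha : a ≠ 0)
    (h : a • (x - y) = x + y) :
    dimH {A | pairedSquares x A = pairedSquares y A} ≤ ((2 * m + 1) ^ 2 - (2 * m + 1) : ℕ) := by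
  let Ψ := pairBlocks ℝ m ℝ ∘ₗ (dotProductBilin ℝ ℝ (x - y)).compLeft (Fin (2 * m + 1))
  have hΨ : Surjective Ψ :=
    (pairBlocks_surjective (R := ℝ)).comp (dotProductBilin_surjective hu).comp_left
  have eq_zero_of_definite : ∀ b c : ℝ, b * (a * b) + c * (a * c) = 0 → b = 0 ∧ c = 0 := by
    intro b c hbc
    have : b ^ 2 + c ^ 2 = 0 := mul_left_cancel₀ ha (by linear_combination hbc)
    constructor <;> nlinarith
  have hcov := ((coveredByC1Images_singleton 0 0).preimage hΨ).mono
    (S := {A | pairedSquares x A = pairedSquares y A}) fun A hA => by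
    obtain ⟨h0, hk⟩ := pairBlocks_mem_of_pairedSquares_eq hA
    dsimp [pairBlocks] at h0 hk
    simp only [← h, smul_dotProduct, smul_eq_mul] at h0 hk
    refine Prod.ext (eq_zero_of_definite ((x - y) ⬝ᵥ A 0) 0 (by linear_combination h0)).1
      (funext fun k => Prod.ext_iff.2 (eq_zero_of_definite _ _ (hk k trivial)))
  have hrank := LinearMap.finrank_range_add_finrank_ker Ψ
  rw [LinearMap.range_eq_top.2 hΨ, finrank_top] at hrank
  refine hcov.dimH_le.trans (Nat.cast_le.2 ?_)
  simp [Module.finrank_pi_fintype, sq] at hrank ⊢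
  omega

end PairedSquares

/-- For `N` odd and `x ≠ ±y` in `ℝ^N`, the set of `N × N` matrices `A`
(rows `A 0, …, A (N-1)`) with `P(x;A) = P(y;A)`, where
`P(x;A) = (⟪x,w₁⟫², ⟪x,w₂⟫² + ⟪x,w₃⟫², …, ⟪x,w_{N-1}⟫² + ⟪x,w_N⟫²)`,
has dimension at most `N² - (N+1)/2`. -/
theorem stmt3 {N : ℕ} (hN : Odd N) (x y : Fin N → ℝ) (hxy : x ≠ y) (hxy' : x ≠ -y) :
    dimH {A : Fin N → Fin N → ℝ |
        (∀ h0 : 0 < N, (∑ j, x j * A ⟨0, h0⟩ j) ^ 2 = (∑ j, y j * A ⟨0, h0⟩ j) ^ 2) ∧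
        ∀ k : ℕ, ∀ h : 2 * k + 2 < N,
          (∑ j, x j * A ⟨2 * k + 1, by omega⟩ j) ^ 2 + (∑ j, x j * A ⟨2 * k + 2, h⟩ j) ^ 2 =
          (∑ j, y j * A ⟨2 * k + 1, by omega⟩ j) ^ 2 + (∑ j, y j * A ⟨2 * k + 2, h⟩ j) ^ 2} ≤
      ((N ^ 2 - (N + 1) / 2 : ℕ) : ℝ≥0∞) := by
  obtain ⟨m, rfl⟩ := hN
  refine (dimH_mono (t := {A | pairedSquares x A = pairedSquares y A}) fun A hA =>
    Prod.ext (hA.1 (by omega)) (funext fun k => hA.2 k (by omega))).trans ?_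
  have hu : x - y ≠ 0 := sub_ne_zero.2 hxy
  by_cases hind : LinearIndependent ℝ ![x - y, x + y]
  · exact (dimH_setOf_pairedSquares_eq_le_of_linearIndependent hind).trans
      (Nat.cast_le.2 (by omega))
  · obtain ⟨a, ha⟩ : ∃ a : ℝ, a • (x - y) = x + y := by
      simpa [LinearIndependent.pair_iff' hu] using hind
    have ha0 : a ≠ 0 := by
      rintro rfl
      exact hxy' (eq_neg_of_add_eq_zero_left (by simpa using ha.symm))
    exact (dimH_setOf_pairedSquares_eq_le_of_smul hu ha0 ha).trans (Nat.cast_le.2 (by omega))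
end
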